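/- Let L be a unimodular lattice in ℝ^n. If w and w' are characteristic vectors of L, then their norms are congruent modulo 8: ⟪w,w⟫ − ⟪w',w'⟫ ∈ 8ℤ. -/

import Mathlib

open scoped RealInnerProductSpace

/-- A unimodular (self-dual) lattice in `ℝⁿ`: a `ℤ`-submodule of Euclidean space that is
discrete, spans `ℝⁿ` over `ℝ`, and is self-dual: a vector `v` belongs to the lattice iff
its inner product with every lattice vector is an integer. -/
def IsUnimodularLattice (n : ℕ) (L : Submodule ℤ (EuclideanSpace ℝ (Fin n))) : Prop :=
  DiscreteTopology L ∧
  Submodule.span ℝ (L : Set (EuclideanSpace ℝ (Fin n))) = ⊤ ∧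
  ∀ v : EuclideanSpace ℝ (Fin n), v ∈ L ↔ ∀ y ∈ L, ∃ k : ℤ, ⟪v, y⟫ = (k : ℝ)

/-- A characteristic vector of a lattice `L`: a vector `w ∈ L` with
`⟪w,x⟫ ≡ ⟪x,x⟫ (mod 2)` for all `x ∈ L`. -/
def IsCharacteristic (n : ℕ) (L : Submodule ℤ (EuclideanSpace ℝ (Fin n)))
    (w : EuclideanSpace ℝ (Fin n)) : Prop :=
  w ∈ L ∧ ∀ x ∈ L, ∃ k : ℤ, ⟪w, x⟫ - ⟪x, x⟫ = 2 * (k : ℝ)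

/-! If `w, w'` are characteristic, then `⟪w - w', x⟫` is even for every lattice vector `x`, so by
self-duality `v = (w - w') / 2` lies in the lattice. Expanding `w = w' + 2v` gives
`⟪w, w⟫ - ⟪w', w'⟫ = 4 (⟪w', v⟫ - ⟪v, v⟫) + 8 ⟪v, v⟫`, and the bracket is even because `w'` is
characteristic. -/

section CharacteristicVectors

variable {E : Type*} [NormedAddCommGroup E] [InnerProductSpace ℝ E] {L : Submodule ℤ E}

theorem exists_mem_eq_add_two_smul_of_characteristic
    (hdual : ∀ v : E, (∀ y ∈ L, ∃ k : ℤ, ⟪v, y⟫ = k) → v ∈ L) {w w' : E}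
    (hw : ∀ x ∈ L, ∃ k : ℤ, ⟪w, x⟫ - ⟪x, x⟫ = 2 * k)
    (hw' : ∀ x ∈ L, ∃ k : ℤ, ⟪w', x⟫ - ⟪x, x⟫ = 2 * k) :
    ∃ v ∈ L, w = w' + (2 : ℝ) • v := by
  refine ⟨(2⁻¹ : ℝ) • (w - w'), hdual _ fun y hy => ?_, by module⟩
  obtain ⟨k, hk⟩ := hw y hy
  obtain ⟨k', hk'⟩ := hw' y hy
  refine ⟨k - k', ?_⟩
  rw [real_inner_smul_left, inner_sub_left]
  push_cast
  linarith

theorem real_inner_add_two_smul_self (w v : E) :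
    ⟪w + (2 : ℝ) • v, w + (2 : ℝ) • v⟫ = ⟪w, w⟫ + 4 * (⟪w, v⟫ - ⟪v, v⟫) + 8 * ⟪v, v⟫ := by
  simp only [real_inner_add_add_self, real_inner_smul_left, real_inner_smul_right]
  ring

theorem exists_inner_self_sub_inner_self_eq_eight_mul_of_characteristic
    (hint : ∀ x ∈ L, ∃ k : ℤ, ⟪x, x⟫ = k)
    (hdual : ∀ v : E, (∀ y ∈ L, ∃ k : ℤ, ⟪v, y⟫ = k) → v ∈ L) {w w' : E}
    (hw : ∀ x ∈ L, ∃ k : ℤ, ⟪w, x⟫ - ⟪x, x⟫ = 2 * k)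
    (hw' : ∀ x ∈ L, ∃ k : ℤ, ⟪w', x⟫ - ⟪x, x⟫ = 2 * k) :
    ∃ k : ℤ, ⟪w, w⟫ - ⟪w', w'⟫ = 8 * k := by
  obtain ⟨v, hvL, rfl⟩ := exists_mem_eq_add_two_smul_of_characteristic hdual hw hw'
  obtain ⟨k, hk⟩ := hw' v hvL
  obtain ⟨m, hm⟩ := hint v hvL
  refine ⟨k + m, ?_⟩
  rw [real_inner_add_two_smul_self, hk, hm]
  push_cast
  ring

end CharacteristicVectors

/-- Any two characteristic vectors of a unimodular lattice have norms congruent mod 8. -/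
theorem characteristic_norm_congruent_mod_eight (n : ℕ)
    (L : Submodule ℤ (EuclideanSpace ℝ (Fin n))) (hL : IsUnimodularLattice n L)
    (w w' : EuclideanSpace ℝ (Fin n)) (hw : IsCharacteristic n L w)
    (hw' : IsCharacteristic n L w') :
    ∃ k : ℤ, ⟪w, w⟫ - ⟪w', w'⟫ = 8 * (k : ℝ) := by
  obtain ⟨-, -, hdual⟩ := hL
  exact exists_inner_self_sub_inner_self_eq_eight_mul_of_characteristic
    (fun x hx => (hdual x).mp hx x hx) (fun v hv => (hdual v).mpr hv) hw.2 hw'.2
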